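/- arXiv:0904.0524 — 3 statements merged into one kernel-verified Lean document; each statement's English description precedes it below -/
import Mathlib

section
/- Let ø be a Dedekind domain and let A, B be n×n matrices over ø with nonzero determinant. Then for every 1 ≤ k ≤ n, the ideal δ_{n-k}(A)·δ_{n-k}(B)·δ_k(AB) divides the ideal δ_{n-k}(A)·δ_k(A)·δ_n(B) + δ_{n-k}(B)·δ_k(B)·δ_n(A). (Equivalently, in terms of fractional ideals, δ_k(AB) divides δ_k(A)·δ_n(B)·δ_{n-k}(B)^{-1} + δ_k(B)·δ_n(A)·δ_{n-k}(A)^{-1}.) -/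
/-!
Since `B * adjugate B = det B • 1`, every `k × k` minor of `det B • A = (A * B) * adjugate B` is,
by Cauchy–Binet, a sum of products of a `k × k` minor of `A * B` and a `k × k` minor of
`adjugate B`. By Jacobi's identity the latter is `± det B ^ (k - 1)` times the complementary
`(n - k) × (n - k)` minor of `B`, so cancelling `det B ^ (k - 1)` gives
`det B · δ_k(A) ⊆ δ_k(AB) δ_{n-k}(B)`, and transposing gives `det A · δ_k(B) ⊆ δ_k(AB) δ_{n-k}(A)`.
Since `δ_n(B) ⊆ (det B)` and `δ_n(A) ⊆ (det A)`, both summands lie in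
`δ_{n-k}(A) δ_{n-k}(B) δ_k(AB)`, and in a Dedekind domain containment is divisibility.
-/

/-- The `k`-th determinantal divisor of a square matrix: the ideal generated by
all `k × k` minors.  For `k = 0` this is the whole ring, and for `k` larger than
the size of the matrix it is the zero ideal. -/
def detDiv {R : Type*} [CommRing R] {ι : Type*} [Fintype ι] (k : ℕ)
    (A : Matrix ι ι R) : Ideal R :=
  Ideal.span {x | ∃ f g : Fin k ↪ ι, x = (A.submatrix f g).det}

open Finset Matrix Equiv

theorem exists_sum_equiv_comp_inl {m o ι : Type*} [Fintype m] [Fintype o] [Fintype ι]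
    (p : m ↪ ι) (h : Fintype.card m + Fintype.card o = Fintype.card ι) :
    ∃ e : m ⊕ o ≃ ι, e ∘ Sum.inl = p := by
  classical
  have hcard : Fintype.card o = Fintype.card ↥(Set.range p)ᶜ := by
    rw [Fintype.card_compl_set, Set.card_range_of_injective p.injective]
    omega
  exact ⟨(sumCongr (ofInjective p p.injective) (Fintype.equivOfCardEq hcard)).trans
    (Equiv.Set.sumCompl _), rfl⟩

namespace Matrix

variable {R : Type*} [CommRing R]

section CauchyBinet

variable {m ι : Type*} [Fintype m] [DecidableEq m]

theorem sum_perm_det_submatrix_mul_prod (P : Matrix m ι R) (Q : Matrix ι m R) (e : m ↪ ι) :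
    ∑ σ : Perm m, (P.submatrix id (σ.toEmbedding.trans e)).det *
        ∏ i, Q (σ.toEmbedding.trans e i) i =
      (P.submatrix id e).det * (Q.submatrix e id).det := by
  rw [det_apply' (Q.submatrix e id), mul_sum]
  refine sum_congr rfl fun σ _ => ?_
  have : P.submatrix id (σ.toEmbedding.trans e) = (P.submatrix id e).submatrix id σ := rfl
  rw [this, det_permute']
  simp only [submatrix_apply, id, Function.Embedding.trans_apply, Equiv.coe_toEmbedding]
  ring

variable [Fintype ι] [DecidableEq ι]

theorem det_mul_eq_sum_embedding (P : Matrix m ι R) (Q : Matrix ι m R) :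
    (P * Q).det = ∑ p : m ↪ ι, (P.submatrix id p).det * ∏ i, Q (p i) i := by
  have hfun : (P * Q).det = ∑ p : m → ι, (P.submatrix id p).det * ∏ i, Q (p i) i := by
    simp only [det_apply', mul_apply, prod_univ_sum, mul_sum, sum_mul, prod_mul_distrib,
      Fintype.piFinset_univ, submatrix_apply, id, mul_assoc]
    exact sum_comm
  have hnoninj : ∑ p : {p : m → ι // ¬ Function.Injective p},
      (P.submatrix id p).det * ∏ i, Q (p.1 i) i = 0 := by
    refine sum_eq_zero fun ⟨p, hp⟩ _ => ?_
    obtain ⟨i, j, hij, hne⟩ := Function.not_injective_iff.mp hp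
    rw [det_zero_of_column_eq hne fun r => by simp [hij], zero_mul]
  rw [hfun, ← Fintype.sum_subtype_add_sum_subtype Function.Injective, hnoninj, add_zero]
  exact Fintype.sum_equiv (Equiv.subtypeInjectiveEquivEmbedding m ι) _ _ fun _ => rfl

theorem sum_embedding_map_eq_sum_perm {M : Type*} [AddCommMonoid M] (f : (m ↪ ι) → M)
    (e : m ↪ ι) :
    ∑ p with univ.map p = univ.map e, f p = ∑ σ : Perm m, f (σ.toEmbedding.trans e) := by
  have hrange : ∀ p : m ↪ ι, univ.map p = univ.map e ↔ Set.range p = Set.range e := by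
    intro p
    rw [← coe_inj, coe_map, coe_map, coe_univ, Set.image_univ, Set.image_univ]
  refine (sum_bij (fun σ _ => σ.toEmbedding.trans e) (fun σ _ => ?_) (fun σ _ τ _ h => ?_)
    (fun p hp => ?_) fun _ _ => rfl).symm
  · simp only [mem_filter, mem_univ, true_and, hrange]
    exact σ.surjective.range_comp e
  · exact Equiv.ext fun i => e.injective (DFunLike.congr_fun h i)
  · simp only [mem_filter, mem_univ, true_and, hrange] at hp
    refine ⟨(Equiv.ofInjective p p.injective).trans
      ((Equiv.setCongr hp).trans (Equiv.ofInjective e e.injective).symm), mem_univ _, ?_⟩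
    ext i
    exact Equiv.apply_ofInjective_symm e.injective _

theorem det_mul_mem_mul {I J : Ideal R} (P : Matrix m ι R) (Q : Matrix ι m R)
    (hP : ∀ e : m ↪ ι, (P.submatrix id e).det ∈ I)
    (hQ : ∀ e : m ↪ ι, (Q.submatrix e id).det ∈ J) :
    (P * Q).det ∈ I * J := by
  rw [det_mul_eq_sum_embedding, ← sum_fiberwise univ fun p : m ↪ ι => univ.map p]
  refine Ideal.sum_mem _ fun S _ => ?_
  by_cases hS : ∃ e : m ↪ ι, univ.map e = S
  · obtain ⟨e, rfl⟩ := hS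
    rw [sum_embedding_map_eq_sum_perm, sum_perm_det_submatrix_mul_prod]
    exact Ideal.mul_mem_mul (hP e) (hQ e)
  · rw [sum_eq_zero fun p hp => absurd ⟨p, (mem_filter.1 hp).2⟩ hS]
    exact zero_mem _

end CauchyBinet

theorem det_submatrix_equiv {m n : Type*} [Fintype m] [DecidableEq m] [Fintype n] [DecidableEq n]
    (e₁ e₂ : m ≃ n) (M : Matrix n n R) :
    (M.submatrix e₁ e₂).det = Perm.sign (e₂.symm.trans e₁) * M.det := by
  simpa using det_reindex e₁.symm e₂.symm M

theorem det_mul_det_toBlocks₁₁_of_mul_eq_smul_one {m o : Type*} [Fintype m] [DecidableEq m]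
    [Fintype o] [DecidableEq o] {M Y : Matrix (m ⊕ o) (m ⊕ o) R} {d : R} (h : M * Y = d • 1) :
    M.det * Y.toBlocks₁₁.det = d ^ Fintype.card m * M.toBlocks₂₂.det := by
  rw [← fromBlocks_toBlocks M, ← fromBlocks_toBlocks Y, fromBlocks_multiply, ← fromBlocks_one,
    fromBlocks_smul, fromBlocks_inj] at h
  obtain ⟨h₁₁, -, h₂₁, -⟩ := h
  have hMX : M * fromBlocks Y.toBlocks₁₁ 0 Y.toBlocks₂₁ 1 =
      fromBlocks (d • 1) M.toBlocks₁₂ 0 M.toBlocks₂₂ := by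
    rw [← fromBlocks_toBlocks M, fromBlocks_multiply, h₁₁, h₂₁]
    simp
  calc M.det * Y.toBlocks₁₁.det = (M * fromBlocks Y.toBlocks₁₁ 0 Y.toBlocks₂₁ 1).det := by
        rw [det_mul, det_fromBlocks_zero₁₂, det_one, mul_one]
    _ = d ^ Fintype.card m * M.toBlocks₂₂.det := by
        rw [hMX, det_fromBlocks_zero₂₁, det_smul, det_one, mul_one]

theorem sign_mul_det_mul_det_submatrix_adjugate {ι m o : Type*} [Fintype ι] [DecidableEq ι]
    [Fintype m] [DecidableEq m] [Fintype o] [DecidableEq o] (B : Matrix ι ι R)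
    (eR eC : m ⊕ o ≃ ι) :
    Perm.sign (eR.symm.trans eC) * B.det *
        ((adjugate B).submatrix (eR ∘ Sum.inl) (eC ∘ Sum.inl)).det =
      B.det ^ Fintype.card m * (B.submatrix (eC ∘ Sum.inr) (eR ∘ Sum.inr)).det := by
  have := det_mul_det_toBlocks₁₁_of_mul_eq_smul_one (M := B.submatrix eC eR)
    (Y := (adjugate B).submatrix eR eC) (d := B.det)
    (by rw [submatrix_mul_equiv, mul_adjugate]; ext i j; simp [one_apply])
  rwa [det_submatrix_equiv] at this

end Matrix

section detDiv

variable {R : Type*} [CommRing R]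

theorem detDiv_transpose {ι : Type*} [Fintype ι] (k : ℕ) (M : Matrix ι ι R) :
    detDiv k Mᵀ = detDiv k M := by
  have key : ∀ N : Matrix ι ι R, detDiv k Nᵀ ≤ detDiv k N := by
    refine fun N => Ideal.span_mono ?_
    rintro _ ⟨f, g, rfl⟩
    exact ⟨g, f, by rw [← transpose_submatrix, det_transpose]⟩
  exact le_antisymm (key M) (by simpa using key Mᵀ)

theorem detDiv_le_span_det {n : ℕ} (M : Matrix (Fin n) (Fin n) R) :
    detDiv n M ≤ Ideal.span {M.det} := by
  rw [detDiv, Ideal.span_le]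
  rintro _ ⟨f, g, rfl⟩
  rw [SetLike.mem_coe, Ideal.mem_span_singleton]
  have : M.submatrix f g = M.submatrix (ofBijective f f.injective.bijective_of_finite)
      (ofBijective g g.injective.bijective_of_finite) := rfl
  rw [this, det_submatrix_equiv]
  exact dvd_mul_left _ _

theorem det_submatrix_adjugate_mem_span_pow_mul_detDiv [IsDomain R] {n k : ℕ} (hk : 1 ≤ k)
    (hkn : k ≤ n) (B : Matrix (Fin n) (Fin n) R) (hB : B.det ≠ 0) (p q : Fin k ↪ Fin n) :
    ((adjugate B).submatrix p q).det ∈ Ideal.span {B.det ^ (k - 1)} * detDiv (n - k) B := by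
  have hcard : Fintype.card (Fin k) + Fintype.card (Fin (n - k)) = Fintype.card (Fin n) := by
    simp only [Fintype.card_fin]; omega
  obtain ⟨eR, hR⟩ := exists_sum_equiv_comp_inl p hcard
  obtain ⟨eC, hC⟩ := exists_sum_equiv_comp_inl q hcard
  rw [← hR, ← hC]
  have hjacobi := sign_mul_det_mul_det_submatrix_adjugate B eR eC
  set ε : R := ((Perm.sign (eR.symm.trans eC) : ℤ) : R)
  have hε : ε * ε = 1 := by simp [ε, ← Int.cast_mul, ← Units.val_mul, Int.units_mul_self]
  refine Ideal.mem_span_singleton_mul.2 ⟨ε * (B.submatrix (eC ∘ Sum.inr) (eR ∘ Sum.inr)).det,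
    Ideal.mul_mem_left _ _ (Ideal.subset_span ⟨Function.Embedding.inr.trans eC.toEmbedding,
      Function.Embedding.inr.trans eR.toEmbedding, rfl⟩), mul_left_cancel₀ hB ?_⟩
  rw [Fintype.card_fin] at hjacobi
  calc B.det * (B.det ^ (k - 1) * (ε * (B.submatrix (eC ∘ Sum.inr) (eR ∘ Sum.inr)).det))
      = ε * (B.det ^ k * (B.submatrix (eC ∘ Sum.inr) (eR ∘ Sum.inr)).det) := by
        rw [← mul_assoc, ← pow_succ', Nat.sub_add_cancel hk]; ring
    _ = _ := by rw [← hjacobi, ← mul_assoc, ← mul_assoc, hε, one_mul]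

theorem span_det_mul_detDiv_le_right [IsDomain R] {n k : ℕ} (hk : 1 ≤ k) (hkn : k ≤ n)
    (A B : Matrix (Fin n) (Fin n) R) :
    Ideal.span {B.det} * detDiv k A ≤ detDiv k (A * B) * detDiv (n - k) B := by
  rcases eq_or_ne B.det 0 with hB | hB
  · simp [hB]
  rw [← Ideal.span_singleton_mul_right_mono (pow_ne_zero (k - 1) hB), ← mul_assoc,
    Ideal.span_singleton_mul_span_singleton, ← pow_succ, Nat.sub_add_cancel hk, detDiv,
    Ideal.span_mul_span', Ideal.span_le]
  rintro _ ⟨_, rfl, _, ⟨f, g, rfl⟩, rfl⟩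
  dsimp only
  have hfactor : B.det ^ k * (A.submatrix f g).det =
      ((A * B).submatrix f id * (adjugate B).submatrix id g).det := by
    rw [← submatrix_mul _ _ _ _ _ Function.bijective_id, Matrix.mul_assoc, mul_adjugate,
      Matrix.mul_smul, Matrix.mul_one]
    exact ((det_smul (A.submatrix f g) B.det).trans (by rw [Fintype.card_fin])).symm
  rw [SetLike.mem_coe, hfactor, mul_left_comm]
  refine det_mul_mem_mul _ _ (fun e => Ideal.subset_span ⟨f, e, rfl⟩) fun e => ?_
  exact det_submatrix_adjugate_mem_span_pow_mul_detDiv hk hkn B hB e g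

theorem span_det_mul_detDiv_le_left [IsDomain R] {n k : ℕ} (hk : 1 ≤ k) (hkn : k ≤ n)
    (A B : Matrix (Fin n) (Fin n) R) :
    Ideal.span {A.det} * detDiv k B ≤ detDiv k (A * B) * detDiv (n - k) A := by
  simpa only [det_transpose, detDiv_transpose, ← transpose_mul] using
    span_det_mul_detDiv_le_right hk hkn Bᵀ Aᵀ

end detDiv

theorem detDiv_mul_dvd_sum_general (𝒪 : Type*) [CommRing 𝒪]
    [IsDedekindDomain 𝒪] (n : ℕ) (A B : Matrix (Fin n) (Fin n) 𝒪) :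
    ∀ k, 1 ≤ k → k ≤ n →
      detDiv (n - k) A * detDiv (n - k) B * detDiv k (A * B) ∣
        detDiv (n - k) A * detDiv k A * detDiv n B +
          detDiv (n - k) B * detDiv k B * detDiv n A := by
  intro k hk hkn
  rw [Ideal.dvd_iff_le]
  refine sup_le ?_ ?_
  · calc detDiv (n - k) A * detDiv k A * detDiv n B
        ≤ detDiv (n - k) A * (Ideal.span {B.det} * detDiv k A) := by
          rw [mul_assoc, mul_comm (detDiv k A)]
          exact Ideal.mul_mono_right (Ideal.mul_mono_left (detDiv_le_span_det B))
      _ ≤ detDiv (n - k) A * (detDiv k (A * B) * detDiv (n - k) B) :=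
          Ideal.mul_mono_right (span_det_mul_detDiv_le_right hk hkn A B)
      _ = detDiv (n - k) A * detDiv (n - k) B * detDiv k (A * B) := by ring
  · calc detDiv (n - k) B * detDiv k B * detDiv n A
        ≤ detDiv (n - k) B * (Ideal.span {A.det} * detDiv k B) := by
          rw [mul_assoc, mul_comm (detDiv k B)]
          exact Ideal.mul_mono_right (Ideal.mul_mono_left (detDiv_le_span_det A))
      _ ≤ detDiv (n - k) B * (detDiv k (A * B) * detDiv (n - k) A) :=
          Ideal.mul_mono_right (span_det_mul_detDiv_le_left hk hkn A B)
      _ = detDiv (n - k) A * detDiv (n - k) B * detDiv k (A * B) := by ring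

/-- Upper bound: `δ_{n-k}(A) δ_{n-k}(B) δ_k(A B)` divides
`δ_{n-k}(A) δ_k(A) δ_n(B) + δ_{n-k}(B) δ_k(B) δ_n(A)`. -/
theorem detDiv_mul_dvd_sum (𝒪 : Type*) [CommRing 𝒪] [IsDomain 𝒪]
    [IsDedekindDomain 𝒪] (n : ℕ) (A B : Matrix (Fin n) (Fin n) 𝒪)
    (hA : A.det ≠ 0) (hB : B.det ≠ 0) :
    ∀ k, 1 ≤ k → k ≤ n →
      detDiv (n - k) A * detDiv (n - k) B * detDiv k (A * B) ∣
        detDiv (n - k) A * detDiv k A * detDiv n B +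
          detDiv (n - k) B * detDiv k B * detDiv n A :=
  detDiv_mul_dvd_sum_general 𝒪 n A B
end

section
/- Let ø be a principal ideal domain and let a_1, a_2, b_1, b_2, c_1, c_2 be nonzero ideals of ø. The triple ((a_1, a_2), (b_1, b_2), (c_1, c_2)) is realisable if and only if the following conditions hold: (1) a_1² divides a_2, b_1² divides b_2, and c_1² divides c_2; (2) a_2·b_2 = c_2; (3) a_1·b_1 divides c_1 and a_1·b_1·c_1 divides b_1²·a_2 + a_1²·b_2 (equivalently, c_1 divides a_1·b_1·(a_1^{-2}·a_2 + b_1^{-2}·b_2) as fractional ideals). -/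
/-- The triple `((a₁, …, aₙ), (b₁, …, bₙ), (c₁, …, cₙ))` of lists of ideals is
realisable if there are `n × n` matrices `A, B` with nonzero determinant such
that `δ_k(A) = a_k`, `δ_k(B) = b_k` and `δ_k(A * B) = c_k` for all `1 ≤ k ≤ n`. -/
def Realisable {R : Type*} [CommRing R] (n : ℕ) (a b c : ℕ → Ideal R) : Prop :=
  ∃ A B : Matrix (Fin n) (Fin n) R, A.det ≠ 0 ∧ B.det ≠ 0 ∧
    ∀ k, 1 ≤ k → k ≤ n → detDiv k A = a k ∧ detDiv k B = b k ∧ detDiv k (A * B) = c k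

/-!
For `2 × 2` matrices `δ₂(M) = (det M)`, so `δ₂` is multiplicative, and `det M ∈ δ₁(M)²`.
The adjugate of a `2 × 2` matrix has the entries of the matrix up to sign, so the identities
`det A • B = adj A * (A * B)` and `det B • A = (A * B) * adj B` give `a₂ b₁ ⊆ a₁ c₁` and
`a₁ b₂ ⊆ c₁ b₁`, whence the last divisibility.
Conversely, write `a₂ = a₁² (σ)`, `b₂ = b₁² (τ)`, `c₁ = a₁ b₁ (γ)`; cancelling `a₁² b₁²` in the last
condition gives `γ ∣ σ` and `γ ∣ τ`, and with `a₁ = (α)`, `b₁ = (β)` the matrices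
`A = !![α, 0; 0, α σ]` and `B = !![β γ, -β τ; β, 0]` realise the triple.
-/

open Matrix

section CommRing

variable {R : Type*} [CommRing R] {ι : Type*} [Fintype ι]

theorem detDiv_one_eq_span_range (M : Matrix ι ι R) :
    detDiv 1 M = Ideal.span (Set.range fun p : ι × ι => M p.1 p.2) := by
  unfold detDiv
  congr 1
  ext x
  simp only [Set.mem_ofPred_eq, Set.mem_range, det_fin_one, submatrix_apply, Prod.exists]
  constructor
  · rintro ⟨f, g, rfl⟩
    exact ⟨f 0, g 0, rfl⟩
  · rintro ⟨i, j, rfl⟩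
    exact ⟨⟨fun _ => i, Function.injective_of_subsingleton _⟩,
      ⟨fun _ => j, Function.injective_of_subsingleton _⟩, rfl⟩

theorem entry_mem_detDiv_one (M : Matrix ι ι R) (i j : ι) :
    M i j ∈ detDiv 1 M := by
  rw [detDiv_one_eq_span_range]
  exact Ideal.subset_span ⟨(i, j), rfl⟩

theorem detDiv_one_le_iff {M : Matrix ι ι R} {I : Ideal R} :
    detDiv 1 M ≤ I ↔ ∀ i j, M i j ∈ I := by
  simp [detDiv_one_eq_span_range, Ideal.span_le, Set.range_subset_iff]

theorem detDiv_one_eq_span_singleton {M : Matrix ι ι R} {d : R}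
    {i j : ι} (hd : M i j = d) (hdvd : ∀ i j, d ∣ M i j) : detDiv 1 M = Ideal.span {d} :=
  le_antisymm (detDiv_one_le_iff.2 fun i j => Ideal.mem_span_singleton.2 (hdvd i j))
    (Ideal.span_le.2 <| Set.singleton_subset_iff.2 <| hd ▸ entry_mem_detDiv_one M i j)

theorem detDiv_one_smul (r : R) (M : Matrix ι ι R) :
    detDiv 1 (r • M) = Ideal.span {r} * detDiv 1 M := by
  rw [detDiv_one_eq_span_range, detDiv_one_eq_span_range, Ideal.span_mul_span',
    Set.singleton_mul, ← Set.range_comp]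
  rfl

theorem detDiv_one_mul_le (M N : Matrix ι ι R) :
    detDiv 1 (M * N) ≤ detDiv 1 M * detDiv 1 N :=
  detDiv_one_le_iff.2 fun i j => Ideal.sum_mem _ fun k _ =>
    Ideal.mul_mem_mul (entry_mem_detDiv_one M i k) (entry_mem_detDiv_one N k j)

theorem det_mem_detDiv_one_pow [DecidableEq ι] (M : Matrix ι ι R) :
    M.det ∈ detDiv 1 M ^ Fintype.card ι := by
  rw [det_apply']
  refine Ideal.sum_mem _ fun σ _ => Ideal.mul_mem_left _ _ ?_
  simpa using Ideal.prod_mem_prod (s := Finset.univ) fun i _ => entry_mem_detDiv_one M (σ i) i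

theorem detDiv_card_eq_span_det {n : ℕ} (M : Matrix (Fin n) (Fin n) R) :
    detDiv n M = Ideal.span {M.det} := by
  refine le_antisymm (Ideal.span_le.2 ?_) (Ideal.span_le.2 ?_)
  · rintro _ ⟨f, g, rfl⟩
    let σ := Equiv.ofBijective f f.injective.bijective_of_finite
    let τ := Equiv.ofBijective g g.injective.bijective_of_finite
    have hsub : M.submatrix f g = (M.submatrix σ id).submatrix id τ := rfl
    rw [SetLike.mem_coe, Ideal.mem_span_singleton, hsub, det_permute', det_permute]
    exact dvd_mul_of_dvd_right (dvd_mul_left _ _) _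
  · rw [Set.singleton_subset_iff]
    exact Ideal.subset_span ⟨Function.Embedding.refl _, Function.Embedding.refl _, rfl⟩

theorem detDiv_card_le_pow {n : ℕ} (M : Matrix (Fin n) (Fin n) R) :
    detDiv n M ≤ detDiv 1 M ^ n := by
  rw [detDiv_card_eq_span_det, Ideal.span_singleton_le_iff_mem]
  simpa using det_mem_detDiv_one_pow M

theorem detDiv_card_mul {n : ℕ} (M N : Matrix (Fin n) (Fin n) R) :
    detDiv n (M * N) = detDiv n M * detDiv n N := by
  rw [detDiv_card_eq_span_det, detDiv_card_eq_span_det, detDiv_card_eq_span_det, det_mul,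
    Ideal.span_singleton_mul_span_singleton]

theorem detDiv_one_adjugate_le (M : Matrix (Fin 2) (Fin 2) R) :
    detDiv 1 M.adjugate ≤ detDiv 1 M := by
  refine detDiv_one_le_iff.2 fun i j => ?_
  rw [adjugate_fin_two]
  fin_cases i <;> fin_cases j <;> simp [entry_mem_detDiv_one]

theorem span_det_mul_detDiv_one_le (A B : Matrix (Fin 2) (Fin 2) R) :
    Ideal.span {A.det} * detDiv 1 B ≤ detDiv 1 A * detDiv 1 (A * B) :=
  calc Ideal.span {A.det} * detDiv 1 B
      = detDiv 1 (A.adjugate * (A * B)) := by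
        rw [← Matrix.mul_assoc, adjugate_mul, smul_mul, Matrix.one_mul, detDiv_one_smul]
    _ ≤ detDiv 1 A.adjugate * detDiv 1 (A * B) := detDiv_one_mul_le _ _
    _ ≤ detDiv 1 A * detDiv 1 (A * B) := Ideal.mul_mono_left (detDiv_one_adjugate_le A)

theorem detDiv_one_mul_span_det_le (A B : Matrix (Fin 2) (Fin 2) R) :
    detDiv 1 A * Ideal.span {B.det} ≤ detDiv 1 (A * B) * detDiv 1 B :=
  calc detDiv 1 A * Ideal.span {B.det}
      = detDiv 1 (A * B * B.adjugate) := by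
        rw [Matrix.mul_assoc, mul_adjugate, Matrix.mul_smul, Matrix.mul_one, detDiv_one_smul,
          mul_comm]
    _ ≤ detDiv 1 (A * B) * detDiv 1 B.adjugate := detDiv_one_mul_le _ _
    _ ≤ detDiv 1 (A * B) * detDiv 1 B := Ideal.mul_mono_right (detDiv_one_adjugate_le B)

theorem sq_mul_detDiv_two_add_le (A B : Matrix (Fin 2) (Fin 2) R) :
    detDiv 1 B ^ 2 * detDiv 2 A + detDiv 1 A ^ 2 * detDiv 2 B ≤
      detDiv 1 A * detDiv 1 B * detDiv 1 (A * B) := by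
  rw [detDiv_card_eq_span_det, detDiv_card_eq_span_det, Ideal.add_eq_sup, sup_le_iff]
  constructor
  · calc detDiv 1 B ^ 2 * Ideal.span {A.det}
        = detDiv 1 B * (Ideal.span {A.det} * detDiv 1 B) := by ring
      _ ≤ detDiv 1 B * (detDiv 1 A * detDiv 1 (A * B)) :=
        Ideal.mul_mono_right (span_det_mul_detDiv_one_le A B)
      _ = detDiv 1 A * detDiv 1 B * detDiv 1 (A * B) := by ring
  · calc detDiv 1 A ^ 2 * Ideal.span {B.det}
        = detDiv 1 A * (detDiv 1 A * Ideal.span {B.det}) := by ring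
      _ ≤ detDiv 1 A * (detDiv 1 (A * B) * detDiv 1 B) :=
        Ideal.mul_mono_right (detDiv_one_mul_span_det_le A B)
      _ = detDiv 1 A * detDiv 1 B * detDiv 1 (A * B) := by ring

theorem realisable_two_iff (a b c : ℕ → Ideal R) :
    Realisable 2 a b c ↔ ∃ A B : Matrix (Fin 2) (Fin 2) R, A.det ≠ 0 ∧ B.det ≠ 0 ∧
      (detDiv 1 A = a 1 ∧ detDiv 1 B = b 1 ∧ detDiv 1 (A * B) = c 1) ∧
      (detDiv 2 A = a 2 ∧ detDiv 2 B = b 2 ∧ detDiv 2 (A * B) = c 2) := by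
  refine exists₂_congr fun A B => and_congr_right' <| and_congr_right' ⟨fun h => ?_, fun h => ?_⟩
  · exact ⟨h 1 le_rfl one_le_two, h 2 one_le_two le_rfl⟩
  · intro k hk₁ hk₂
    interval_cases k
    exacts [h.1, h.2]

theorem exists_detDiv_eq_span_singleton {α β γ σ τ : R} (hσ : γ ∣ σ) (hτ : γ ∣ τ)
    (hA : α ^ 2 * σ ≠ 0) (hB : β ^ 2 * τ ≠ 0) :
    ∃ A B : Matrix (Fin 2) (Fin 2) R, A.det ≠ 0 ∧ B.det ≠ 0 ∧
      (detDiv 1 A = Ideal.span {α} ∧ detDiv 1 B = Ideal.span {β} ∧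
        detDiv 1 (A * B) = Ideal.span {α * β * γ}) ∧
      detDiv 2 A = Ideal.span {α ^ 2 * σ} ∧ detDiv 2 B = Ideal.span {β ^ 2 * τ} := by
  set A : Matrix (Fin 2) (Fin 2) R := !![α, 0; 0, α * σ]
  set B : Matrix (Fin 2) (Fin 2) R := !![β * γ, -(β * τ); β, 0]
  have hdetA : A.det = α ^ 2 * σ := by rw [det_fin_two_of]; ring
  have hdetB : B.det = β ^ 2 * τ := by rw [det_fin_two_of]; ring
  have hAB : A * B = !![α * β * γ, -(α * β * τ); α * β * σ, 0] := by
    rw [mul_fin_two]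
    simp only [zero_mul, mul_zero, add_zero, zero_add, mul_neg, neg_zero, mul_assoc, mul_comm σ β]
  refine ⟨A, B, hdetA ▸ hA, hdetB ▸ hB, ⟨?_, ?_, ?_⟩, ?_, ?_⟩
  · refine detDiv_one_eq_span_singleton (i := 0) (j := 0) rfl fun i j => ?_
    fin_cases i <;> fin_cases j <;> simp [A]
  · refine detDiv_one_eq_span_singleton (i := 1) (j := 0) rfl fun i j => ?_
    fin_cases i <;> fin_cases j <;> simp [B, mul_comm β]
  · rw [hAB]
    refine detDiv_one_eq_span_singleton (i := 0) (j := 0) rfl fun i j => ?_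
    fin_cases i <;> fin_cases j <;> simp [mul_dvd_mul_left, hσ, hτ]
  · rw [detDiv_card_eq_span_det, hdetA]
  · rw [detDiv_card_eq_span_det, hdetB]

end CommRing

theorem Ideal.dvd_and_dvd_of_mul_mul_dvd {R : Type*} [CommRing R] [IsDedekindDomain R]
    {a b γ σ τ : Ideal R} (ha : a ≠ ⊥) (hb : b ≠ ⊥)
    (h : a * b * (a * b * γ) ∣ b ^ 2 * (a ^ 2 * σ) + a ^ 2 * (b ^ 2 * τ)) : γ ∣ σ ∧ γ ∣ τ := by
  have hab : a ^ 2 * b ^ 2 ≠ 0 := mul_ne_zero (pow_ne_zero 2 ha) (pow_ne_zero 2 hb)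
  rw [show a * b * (a * b * γ) = a ^ 2 * b ^ 2 * γ by ring,
    show b ^ 2 * (a ^ 2 * σ) + a ^ 2 * (b ^ 2 * τ) = a ^ 2 * b ^ 2 * (σ + τ) by ring,
    mul_dvd_mul_iff_left hab, Ideal.dvd_iff_le, Ideal.add_eq_sup, sup_le_iff] at h
  exact ⟨Ideal.dvd_iff_le.2 h.1, Ideal.dvd_iff_le.2 h.2⟩

theorem exists_detDiv_eq_of_dvd {R : Type*} [CommRing R] [IsDomain R] [IsPrincipalIdealRing R]
    {a₁ a₂ b₁ b₂ c₁ : Ideal R} (ha₂ : a₂ ≠ ⊥) (hb₂ : b₂ ≠ ⊥) (ha : a₁ ^ 2 ∣ a₂) (hb : b₁ ^ 2 ∣ b₂)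
    (hc : a₁ * b₁ ∣ c₁) (habc : a₁ * b₁ * c₁ ∣ b₁ ^ 2 * a₂ + a₁ ^ 2 * b₂) :
    ∃ A B : Matrix (Fin 2) (Fin 2) R, A.det ≠ 0 ∧ B.det ≠ 0 ∧
      (detDiv 1 A = a₁ ∧ detDiv 1 B = b₁ ∧ detDiv 1 (A * B) = c₁) ∧
      detDiv 2 A = a₂ ∧ detDiv 2 B = b₂ := by
  obtain ⟨σ', rfl⟩ := ha
  obtain ⟨τ', rfl⟩ := hb
  obtain ⟨γ', rfl⟩ := hc
  have ha₁ : a₁ ≠ ⊥ := by rintro rfl; simp at ha₂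
  have hb₁ : b₁ ≠ ⊥ := by rintro rfl; simp at hb₂
  obtain ⟨hσ, hτ⟩ := Ideal.dvd_and_dvd_of_mul_mul_dvd ha₁ hb₁ habc
  obtain ⟨α, rfl⟩ : ∃ α, a₁ = Ideal.span {α} := ⟨_, (Ideal.span_singleton_generator a₁).symm⟩
  obtain ⟨β, rfl⟩ : ∃ β, b₁ = Ideal.span {β} := ⟨_, (Ideal.span_singleton_generator b₁).symm⟩
  obtain ⟨γ, rfl⟩ : ∃ γ, γ' = Ideal.span {γ} := ⟨_, (Ideal.span_singleton_generator γ').symm⟩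
  obtain ⟨σ, rfl⟩ : ∃ σ, σ' = Ideal.span {σ} := ⟨_, (Ideal.span_singleton_generator σ').symm⟩
  obtain ⟨τ, rfl⟩ : ∃ τ, τ' = Ideal.span {τ} := ⟨_, (Ideal.span_singleton_generator τ').symm⟩
  simp only [Ideal.span_singleton_pow, Ideal.span_singleton_mul_span_singleton, ne_eq,
    Ideal.span_singleton_eq_bot, Ideal.span_singleton_dvd_span_singleton_iff_dvd] at *
  exact exists_detDiv_eq_span_singleton hσ hτ ha₂ hb₂

theorem realisable_iff_two_by_two_general (𝒪 : Type*) [CommRing 𝒪] [IsDomain 𝒪]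
    [IsPrincipalIdealRing 𝒪] (a b c : ℕ → Ideal 𝒪)
    (ha2 : a 2 ≠ ⊥) (hb2 : b 2 ≠ ⊥) :
    Realisable 2 a b c ↔
      ((a 1 ^ 2 ∣ a 2 ∧ b 1 ^ 2 ∣ b 2 ∧ c 1 ^ 2 ∣ c 2) ∧
        a 2 * b 2 = c 2 ∧
        (a 1 * b 1 ∣ c 1 ∧ a 1 * b 1 * c 1 ∣ b 1 ^ 2 * a 2 + a 1 ^ 2 * b 2)) := by
  rw [realisable_two_iff]
  constructor
  · rintro ⟨A, B, -, -, ⟨hA₁, hB₁, hC₁⟩, hA₂, hB₂, hC₂⟩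
    rw [← hA₁, ← hB₁, ← hC₁, ← hA₂, ← hB₂, ← hC₂]
    simp only [Ideal.dvd_iff_le]
    exact ⟨⟨detDiv_card_le_pow A, detDiv_card_le_pow B, detDiv_card_le_pow (A * B)⟩,
      (detDiv_card_mul A B).symm, detDiv_one_mul_le A B, sq_mul_detDiv_two_add_le A B⟩
  · rintro ⟨⟨ha, hb, -⟩, hc₂, hc, habc⟩
    obtain ⟨A, B, hA, hB, h₁, hA₂, hB₂⟩ := exists_detDiv_eq_of_dvd ha2 hb2 ha hb hc habc
    exact ⟨A, B, hA, hB, h₁, hA₂, hB₂, by rw [detDiv_card_mul, hA₂, hB₂, hc₂]⟩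

/-- Characterisation of realisability for `2 × 2` matrices over a principal
ideal domain. -/
theorem realisable_iff_two_by_two (𝒪 : Type*) [CommRing 𝒪] [IsDomain 𝒪]
    [IsPrincipalIdealRing 𝒪] (a b c : ℕ → Ideal 𝒪)
    (ha1 : a 1 ≠ ⊥) (ha2 : a 2 ≠ ⊥) (hb1 : b 1 ≠ ⊥) (hb2 : b 2 ≠ ⊥)
    (hc1 : c 1 ≠ ⊥) (hc2 : c 2 ≠ ⊥) :
    Realisable 2 a b c ↔
      ((a 1 ^ 2 ∣ a 2 ∧ b 1 ^ 2 ∣ b 2 ∧ c 1 ^ 2 ∣ c 2) ∧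
        a 2 * b 2 = c 2 ∧
        (a 1 * b 1 ∣ c 1 ∧ a 1 * b 1 * c 1 ∣ b 1 ^ 2 * a 2 + a 1 ^ 2 * b 2)) :=
  realisable_iff_two_by_two_general 𝒪 a b c ha2 hb2
end

section
/- Let ø be a Dedekind domain and let B be an n×n matrix over ø with nonzero determinant. Then there exist P, Q ∈ GL_n(ø) such that the transpose of B satisfies Bᵀ = P B Q; in other words, U_n Bᵀ U_n = U_n B U_n where U_n = GL_n(ø). -/
/-!
Let `d = det B`. The ring `𝒪 ⧸ (d)` is a finite product of rings `𝒪 ⧸ 𝔭 ^ e`, whose ideals form a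
chain. Over a ring whose elements are totally ordered by divisibility, every square matrix can be
diagonalised by multiplying on both sides with products of transvections: move an entry dividing
all others to a corner, clear its row and column, and recurse. Lifting these transvections to `𝒪`
gives `N = U * B * V` with `det U = det V = 1` and `N ≡ Nᵀ` modulo `d`, say `Nᵀ = N + d • Y`.
Since `N * adjugate N = d`, this reads `Nᵀ = N * (1 + adjugate N * Y)`, and the last factor has
determinant `1` because `det Nᵀ = det N ≠ 0`. Hence `B ~ N ~ Nᵀ ~ Bᵀ`.
-/

theorem PreValuationRing.exists_forall_dvd {R ι : Type*} [CommRing R] [PreValuationRing R]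
    [Fintype ι] [Nonempty ι] (f : ι → R) : ∃ i, ∀ j, f i ∣ f j := by
  obtain ⟨i, -, hi⟩ := Finset.univ.exists_maximalFor (fun i => Ideal.span {f i})
    Finset.univ_nonempty
  refine ⟨i, fun j => ?_⟩
  rw [← Ideal.span_singleton_le_span_singleton]
  rcases ValuationRing.dvd_total (f i) (f j) with h | h
  · exact Ideal.span_singleton_le_span_singleton.mpr h
  · exact hi (Finset.mem_univ j) (Ideal.span_singleton_le_span_singleton.mpr h)

namespace IsDedekindDomain

variable {R : Type*} [CommRing R] [IsDedekindDomain R]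

theorem preValuationRing_quotient_prime_pow {P : Ideal R} (hP : Prime P) (e : ℕ) :
    PreValuationRing (R ⧸ P ^ e) := by
  have hπ := Ideal.Quotient.mk_surjective (I := P ^ e)
  have hcomap (J : Ideal (R ⧸ P ^ e)) : ∃ i, J.comap (Ideal.Quotient.mk _) = P ^ i := by
    have hdvd : J.comap (Ideal.Quotient.mk _) ∣ P ^ e := Ideal.dvd_iff_le.mpr <| by
      simpa [Ideal.mk_ker] using Ideal.ker_le_comap (Ideal.Quotient.mk (P ^ e)) (K := J)
    obtain ⟨i, -, hi⟩ := (dvd_prime_pow hP e).mp hdvd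
    exact ⟨i, associated_iff_eq.mp hi⟩
  refine PreValuationRing.iff_ideal_total.mpr ⟨fun J K => ?_⟩
  obtain ⟨i, hi⟩ := hcomap J
  obtain ⟨j, hj⟩ := hcomap K
  rw [← Ideal.comap_le_comap_iff_of_surjective _ hπ, ← Ideal.comap_le_comap_iff_of_surjective _ hπ,
    hi, hj]
  exact (le_total j i).imp (Ideal.pow_le_pow_right ·) (Ideal.pow_le_pow_right ·)

end IsDedekindDomain

namespace Matrix

section Transvections

variable {n m : Type*} [DecidableEq n] {R S : Type*} [CommRing R] [CommRing S]

theorem transpose_transvection (i j : n) (c : R) :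
    (transvection i j c)ᵀ = transvection j i c := by
  simp [transvection, transpose_single]

theorem map_transvection (f : R →+* S) (i j : n) (c : R) :
    (transvection i j c).map f = transvection i j (f c) := by
  simp [transvection, Matrix.map_add, map_single]

variable [Fintype n] [Fintype m] [DecidableEq m]

variable (n R) in
def transvectionSubmonoid : Submonoid (Matrix n n R) :=
  Submonoid.closure (Set.range TransvectionStruct.toMatrix)

namespace transvectionSubmonoid

theorem toMatrix_mem (t : TransvectionStruct n R) : t.toMatrix ∈ transvectionSubmonoid n R :=
  Submonoid.subset_closure (Set.mem_range_self t)

theorem transvection_mem {i j : n} (h : i ≠ j) (c : R) :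
    transvection i j c ∈ transvectionSubmonoid n R :=
  toMatrix_mem ⟨i, j, h, c⟩

theorem le_comap (f : Matrix n n R →* Matrix m m S)
    (hf : ∀ t : TransvectionStruct n R, f t.toMatrix ∈ transvectionSubmonoid m S) :
    transvectionSubmonoid n R ≤ (transvectionSubmonoid m S).comap f :=
  Submonoid.closure_le.mpr (Set.range_subset_iff.mpr hf)

variable {U : Matrix n n R}

theorem det_eq_one (hU : U ∈ transvectionSubmonoid n R) : U.det = 1 := by
  induction hU using Submonoid.closure_induction with
  | mem _ h => obtain ⟨t, rfl⟩ := h; exact t.det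
  | one => exact det_one
  | mul _ _ _ _ hU hV => rw [det_mul, hU, hV, one_mul]

theorem isUnit (hU : U ∈ transvectionSubmonoid n R) : IsUnit U :=
  (isUnit_iff_isUnit_det U).mpr (by rw [det_eq_one hU]; exact isUnit_one)

theorem map_mem (f : R →+* S) (hU : U ∈ transvectionSubmonoid n R) :
    U.map f ∈ transvectionSubmonoid n S :=
  le_comap f.mapMatrix.toMonoidHom (fun t => by
    simpa [TransvectionStruct.toMatrix, map_transvection] using transvection_mem t.hij (f t.c)) hU

theorem exists_map_eq {f : R →+* S} (hf : Function.Surjective f) {U : Matrix n n S}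
    (hU : U ∈ transvectionSubmonoid n S) :
    ∃ U₀ ∈ transvectionSubmonoid n R, U₀.map f = U := by
  have : transvectionSubmonoid n S ≤ (transvectionSubmonoid n R).map f.mapMatrix.toMonoidHom :=
    Submonoid.closure_le.mpr <| Set.range_subset_iff.mpr fun t => by
      obtain ⟨c, hc⟩ := hf t.c
      refine ⟨_, transvection_mem t.hij c, ?_⟩
      simp [map_transvection, hc, TransvectionStruct.toMatrix]
  simpa using this hU

theorem reindex_mem (e : n ≃ m) (hU : U ∈ transvectionSubmonoid n R) :
    reindex e e U ∈ transvectionSubmonoid m R :=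
  le_comap (reindexAlgEquiv R R e : Matrix n n R →* Matrix m m R) (fun t => by
    simpa [← TransvectionStruct.toMatrix_reindexEquiv] using toMatrix_mem (t.reindexEquiv e)) hU

theorem transpose_mem (hU : U ∈ transvectionSubmonoid n R) : Uᵀ ∈ transvectionSubmonoid n R := by
  induction hU using Submonoid.closure_induction with
  | mem _ h =>
    obtain ⟨t, rfl⟩ := h
    simpa [TransvectionStruct.toMatrix, transpose_transvection] using
      transvection_mem t.hij.symm t.c
  | one => simp
  | mul _ _ _ _ hU hV => simpa using mul_mem hV hU

theorem fromBlocks_mem (hU : U ∈ transvectionSubmonoid n R) :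
    fromBlocks U 0 0 (1 : Matrix m m R) ∈ transvectionSubmonoid (n ⊕ m) R := by
  induction hU using Submonoid.closure_induction with
  | mem _ h =>
    obtain ⟨t, rfl⟩ := h
    exact t.toMatrix_sumInl m ▸ toMatrix_mem (t.sumInl m)
  | one => simp
  | mul _ _ _ _ hU hV => simpa [fromBlocks_multiply] using mul_mem hU hV

theorem fromBlocks_upper_mem (X : Matrix n m R) :
    fromBlocks 1 X 0 1 ∈ transvectionSubmonoid (n ⊕ m) R := by
  induction X using Matrix.induction_on' with
  | h_zero => simp
  | h_add X Y hX hY => simpa [fromBlocks_multiply, add_comm] using mul_mem hX hY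
  | h_std_basis i j c =>
    convert transvection_mem (Sum.inl_ne_inr (a := i) (b := j)) c using 1
    ext (a | a) (b | b) <;> simp [transvection, single, one_apply]

theorem fromBlocks_lower_mem (Y : Matrix m n R) :
    fromBlocks 1 0 Y 1 ∈ transvectionSubmonoid (n ⊕ m) R := by
  simpa [fromBlocks_transpose] using transpose_mem (fromBlocks_upper_mem Yᵀ)

theorem exists_mul_row_eq (i j : n) :
    ∃ U ∈ transvectionSubmonoid n R, ∀ (M : Matrix n n R) y, (U * M) i y = M j y := by
  by_cases h : i = j
  · exact ⟨1, one_mem _, fun M y => by rw [one_mul, h]⟩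
  -- rows `(rᵢ, rⱼ)` become `(rᵢ + rⱼ, rⱼ)`, `(rᵢ + rⱼ, -rᵢ)`, `(rⱼ, -rᵢ)`
  refine ⟨transvection i j 1 * transvection j i (-1) * transvection i j 1,
    mul_mem (mul_mem (transvection_mem h 1) (transvection_mem (Ne.symm h) _))
      (transvection_mem h 1), fun M y => ?_⟩
  simp only [Matrix.mul_assoc, transvection_mul_apply_same,
    transvection_mul_apply_of_ne _ _ _ _ h, transvection_mul_apply_of_ne _ _ _ _ (Ne.symm h)]
  ring

theorem exists_mul_col_eq (i j : n) :
    ∃ V ∈ transvectionSubmonoid n R, ∀ (M : Matrix n n R) x, (M * V) x i = M x j := by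
  obtain ⟨U, hU, hrow⟩ := exists_mul_row_eq (R := R) i j
  refine ⟨Uᵀ, transpose_mem hU, fun M x => ?_⟩
  rw [← transpose_transpose (M * Uᵀ), transpose_mul, transpose_transpose, transpose_apply, hrow,
    transpose_apply]

end transvectionSubmonoid

end Transvections

section Diagonalization

theorem dvd_mul_mul_apply {l m n o R : Type*} [Fintype m] [Fintype n] [CommRing R] {p : R}
    {M : Matrix m n R} (h : ∀ x y, p ∣ M x y) (A : Matrix l m R) (B : Matrix n o R)
    (x : l) (y : o) : p ∣ (A * M * B) x y := by
  simp only [mul_apply]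
  exact Finset.dvd_sum fun k _ =>
    dvd_mul_of_dvd_left (Finset.dvd_sum fun l _ => dvd_mul_of_dvd_right (h l k) _) _

variable {n m : Type*} [Fintype n] [DecidableEq n] [Fintype m] [DecidableEq m]
  {R S : Type*} [CommRing R] [CommRing S]

theorem exists_mul_mul_apply_dvd [PreValuationRing R] (c : n) (M : Matrix n n R) :
    ∃ U ∈ transvectionSubmonoid n R, ∃ V ∈ transvectionSubmonoid n R,
      ∀ x y, (U * M * V) c c ∣ (U * M * V) x y := by
  have : Nonempty n := ⟨c⟩
  obtain ⟨⟨i, j⟩, hij⟩ := PreValuationRing.exists_forall_dvd fun p : n × n => M p.1 p.2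
  obtain ⟨U, hU, hrow⟩ := transvectionSubmonoid.exists_mul_row_eq (R := R) c i
  obtain ⟨V, hV, hcol⟩ := transvectionSubmonoid.exists_mul_col_eq (R := R) c j
  have hcorner : (U * M * V) c c = M i j := by rw [Matrix.mul_assoc, hrow, hcol]
  exact ⟨U, hU, V, hV, fun x y => hcorner ▸ dvd_mul_mul_apply (fun x y => hij (x, y)) U V x y⟩

theorem exists_isTwoBlockDiagonal_of_corner_dvd {M : Matrix (n ⊕ Unit) (n ⊕ Unit) R}
    (h : ∀ x y, M (.inr ()) (.inr ()) ∣ M x y) :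
    ∃ U ∈ transvectionSubmonoid (n ⊕ Unit) R, ∃ V ∈ transvectionSubmonoid (n ⊕ Unit) R,
      (U * M * V).IsTwoBlockDiagonal := by
  choose b hb using fun i => h (.inl i) (.inr ())
  choose c hc using fun j => h (.inr ()) (.inl j)
  refine ⟨_, transvectionSubmonoid.fromBlocks_upper_mem (of fun i _ => -b i),
    _, transvectionSubmonoid.fromBlocks_lower_mem (of fun _ j => -c j), ?_⟩
  rw [← fromBlocks_toBlocks M]
  simp only [fromBlocks_multiply]
  constructor
  · ext i ⟨⟩
    simp [toBlocks₁₂, toBlocks₂₂, hb, mul_apply]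
    ring
  · ext ⟨⟩ j
    simp [toBlocks₂₁, toBlocks₂₂, hc, mul_apply]

def IsTransvectionDiagonalizable (M : Matrix n n R) : Prop :=
  ∃ U ∈ transvectionSubmonoid n R, ∃ V ∈ transvectionSubmonoid n R, ∃ D : n → R,
    U * M * V = diagonal D

namespace IsTransvectionDiagonalizable

variable {M : Matrix n n R}

theorem map (h : M.IsTransvectionDiagonalizable) (f : R →+* S) :
    (M.map f).IsTransvectionDiagonalizable := by
  obtain ⟨U, hU, V, hV, D, hD⟩ := h
  refine ⟨U.map f, transvectionSubmonoid.map_mem f hU, V.map f,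
    transvectionSubmonoid.map_mem f hV, f ∘ D, ?_⟩
  rw [← Matrix.map_mul, ← Matrix.map_mul, hD, diagonal_map (map_zero f)]
  rfl

theorem reindex (h : M.IsTransvectionDiagonalizable) (e : n ≃ m) :
    (reindex e e M).IsTransvectionDiagonalizable := by
  obtain ⟨U, hU, V, hV, D, hD⟩ := h
  refine ⟨Matrix.reindex e e U, transvectionSubmonoid.reindex_mem e hU,
    Matrix.reindex e e V, transvectionSubmonoid.reindex_mem e hV, D ∘ e.symm, ?_⟩
  simp only [reindex_apply, submatrix_mul_equiv]
  rw [hD, submatrix_diagonal_equiv]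

end IsTransvectionDiagonalizable

theorem isTransvectionDiagonalizable_sum_unit [PreValuationRing R]
    (IH : ∀ A : Matrix n n R, A.IsTransvectionDiagonalizable)
    (M : Matrix (n ⊕ Unit) (n ⊕ Unit) R) : M.IsTransvectionDiagonalizable := by
  obtain ⟨U₁, hU₁, V₁, hV₁, hdvd⟩ := exists_mul_mul_apply_dvd (.inr ()) M
  obtain ⟨U₂, hU₂, V₂, hV₂, hblock⟩ := exists_isTwoBlockDiagonal_of_corner_dvd hdvd
  set N := U₂ * (U₁ * M * V₁) * V₂
  obtain ⟨U₃, hU₃, V₃, hV₃, D, hD⟩ := IH N.toBlocks₁₁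
  have hN : N = fromBlocks N.toBlocks₁₁ 0 0 (diagonal fun _ => N (.inr ()) (.inr ())) := by
    rw [← hblock.1, ← hblock.2]
    convert (fromBlocks_toBlocks N).symm using 2
    ext ⟨⟩ ⟨⟩
    rfl
  refine ⟨fromBlocks U₃ 0 0 1 * U₂ * U₁,
    mul_mem (mul_mem (transvectionSubmonoid.fromBlocks_mem hU₃) hU₂) hU₁,
    V₁ * V₂ * fromBlocks V₃ 0 0 1,
    mul_mem (mul_mem hV₁ hV₂) (transvectionSubmonoid.fromBlocks_mem hV₃),
    Sum.elim D fun _ => N (.inr ()) (.inr ()), ?_⟩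
  calc fromBlocks U₃ 0 0 1 * U₂ * U₁ * M * (V₁ * V₂ * fromBlocks V₃ 0 0 1)
      = fromBlocks U₃ 0 0 1 * N * fromBlocks V₃ 0 0 1 := by simp only [N, Matrix.mul_assoc]
    _ = _ := by
      rw [hN]
      simp [fromBlocks_multiply, hD, fromBlocks_diagonal]

theorem isTransvectionDiagonalizable_of_preValuationRing [PreValuationRing R]
    (M : Matrix n n R) : M.IsTransvectionDiagonalizable := by
  refine Finite.induction_empty_option
    (P := fun α => ∀ [Fintype α] [DecidableEq α] (M : Matrix α α R),
      M.IsTransvectionDiagonalizable) ?_ ?_ ?_ n M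
  · intro α β e h _ _ M
    let _ := Fintype.ofEquiv β e.symm
    let _ := e.decidableEq
    simpa using (h (Matrix.reindex e.symm e.symm M)).reindex e
  · intro _ _ M
    exact ⟨1, one_mem _, 1, one_mem _, 0, Subsingleton.elim _ _⟩
  · intro α _ h _ _ M
    classical
    let e := Equiv.optionEquivSumPUnit.{0} α
    simpa using (isTransvectionDiagonalizable_sum_unit (fun A => h A)
      (Matrix.reindex e e M)).reindex e.symm

section Pi

variable {ι : Type*} [Finite ι] {A : ι → Type*} [∀ k, CommRing (A k)]

theorem transvectionSubmonoid.exists_forall_map_eval_eq (X : ∀ k, Matrix n n (A k))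
    (hX : ∀ k, X k ∈ transvectionSubmonoid n (A k)) :
    ∃ U ∈ transvectionSubmonoid n (∀ k, A k), ∀ k, U.map (Pi.evalRingHom A k) = X k := by
  classical
  let φ : Matrix n n (∀ k, A k) →* ∀ k, Matrix n n (A k) :=
    MonoidHom.pi fun k => (Pi.evalRingHom A k).mapMatrix.toMonoidHom
  -- a transvection with entry `Pi.single k c` is the identity away from the factor `k`
  have : Submonoid.pi Set.univ (fun k => transvectionSubmonoid n (A k)) ≤
      (transvectionSubmonoid n (∀ k, A k)).map φ := by
    refine Submonoid.pi_le_iff.mpr fun k => Submonoid.map_le_iff_le_comap.mpr <|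
      Submonoid.closure_le.mpr <| Set.range_subset_iff.mpr fun t => ?_
    refine ⟨_, transvection_mem t.hij (Pi.single k t.c), funext fun l => ?_⟩
    by_cases hl : l = k
    · subst hl
      simp [φ, map_transvection, TransvectionStruct.toMatrix]
    · simp [φ, map_transvection, hl, TransvectionStruct.toMatrix]
  obtain ⟨U, hU, hφ⟩ := this (fun k _ => hX k)
  exact ⟨U, hU, fun k => congrFun hφ k⟩

theorem IsTransvectionDiagonalizable.pi {M : Matrix n n (∀ k, A k)}
    (h : ∀ k, (M.map (Pi.evalRingHom A k)).IsTransvectionDiagonalizable) :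
    M.IsTransvectionDiagonalizable := by
  choose U hU V hV D hD using h
  obtain ⟨U', hU', hUU'⟩ := transvectionSubmonoid.exists_forall_map_eval_eq U hU
  obtain ⟨V', hV', hVV'⟩ := transvectionSubmonoid.exists_forall_map_eval_eq V hV
  refine ⟨U', hU', V', hV', fun x k => D k x, ?_⟩
  ext x y k
  have := congrFun (congrFun (hD k) x) y
  rw [← hUU' k, ← hVV' k, ← Matrix.map_mul, ← Matrix.map_mul] at this
  by_cases hxy : x = y <;> simpa [diagonal_apply, hxy] using this

end Pi

theorem isTransvectionDiagonalizable_quotient {R : Type*} [CommRing R] [IsDedekindDomain R]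
    {I : Ideal R} (hI : I ≠ ⊥) (M : Matrix n n (R ⧸ I)) : M.IsTransvectionDiagonalizable := by
  let e := IsDedekindDomain.quotientEquivPiFactors hI
  have : (M.map e).IsTransvectionDiagonalizable := .pi fun P => by
    have := IsDedekindDomain.preValuationRing_quotient_prime_pow
      (UniqueFactorizationMonoid.prime_of_factor _ (Multiset.mem_toFinset.mp P.2))
      ((UniqueFactorizationMonoid.factors I).count P.1)
    exact isTransvectionDiagonalizable_of_preValuationRing _
  simpa [Matrix.map_map, Function.comp_def] using this.map (e.symm : _ →+* R ⧸ I)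

end Diagonalization

section UnimodularEquiv

variable {m n R : Type*} [CommRing R]

theorem exists_eq_add_smul_of_map_mk_eq {M N : Matrix m n R} {d : R}
    (h : M.map (Ideal.Quotient.mk (Ideal.span {d})) = N.map (Ideal.Quotient.mk _)) :
    ∃ Y : Matrix m n R, M = N + d • Y := by
  have (x : m) (y : n) : ∃ z, M x y = N x y + d * z := by
    obtain ⟨z, hz⟩ := Ideal.mem_span_singleton.mp (Ideal.Quotient.eq.mp (congrFun₂ h x y))
    exact ⟨z, by rw [← hz]; ring⟩
  choose Y hY using this
  exact ⟨of Y, by ext x y; simp [hY]⟩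

variable [Fintype n] [DecidableEq n]

def IsUnimodularEquiv (B C : Matrix n n R) : Prop :=
  ∃ P Q : GL n R, C = (P : Matrix n n R) * B * (Q : Matrix n n R)

namespace IsUnimodularEquiv

variable {B C D : Matrix n n R}

theorem of_isUnit {P Q : Matrix n n R} (hP : IsUnit P) (hQ : IsUnit Q) :
    IsUnimodularEquiv B (P * B * Q) :=
  ⟨hP.unit, hQ.unit, rfl⟩

theorem symm (h : IsUnimodularEquiv B C) : IsUnimodularEquiv C B := by
  obtain ⟨P, Q, rfl⟩ := h
  exact ⟨P⁻¹, Q⁻¹, by simp [Matrix.mul_assoc]⟩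

theorem trans (h : IsUnimodularEquiv B C) (h' : IsUnimodularEquiv C D) :
    IsUnimodularEquiv B D := by
  obtain ⟨P, Q, rfl⟩ := h
  obtain ⟨P', Q', rfl⟩ := h'
  exact ⟨P' * P, Q * Q', by simp [Matrix.mul_assoc]⟩

theorem transpose (h : IsUnimodularEquiv B C) : IsUnimodularEquiv Bᵀ Cᵀ := by
  obtain ⟨P, Q, rfl⟩ := h
  simpa [Matrix.mul_assoc] using
    of_isUnit (B := Bᵀ) ((isUnit_transpose _).mpr Q.isUnit) ((isUnit_transpose _).mpr P.isUnit)

end IsUnimodularEquiv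

theorem isUnimodularEquiv_transpose_of_eq_add_det_smul [IsDomain R] {N Y : Matrix n n R}
    (hN : N.det ≠ 0) (hY : Nᵀ = N + N.det • Y) : IsUnimodularEquiv N Nᵀ := by
  have hW : Nᵀ = N * (1 + N.adjugate * Y) := by
    rw [Matrix.mul_add, Matrix.mul_one, ← Matrix.mul_assoc, mul_adjugate, smul_mul, Matrix.one_mul,
      hY]
  have hdet : (1 + N.adjugate * Y).det = 1 :=
    mul_left_cancel₀ hN (by rw [← det_mul, ← hW, det_transpose, mul_one])
  have := IsUnimodularEquiv.of_isUnit (B := N) isUnit_one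
    ((isUnit_iff_isUnit_det _).mpr (hdet ▸ isUnit_one))
  rwa [Matrix.one_mul, ← hW] at this

end UnimodularEquiv

end Matrix

open Matrix in
theorem transpose_unimodular_equivalent_general (𝒪 : Type*) [CommRing 𝒪]
    [IsDedekindDomain 𝒪] (n : ℕ) (B : Matrix (Fin n) (Fin n) 𝒪)
    (hB : B.det ≠ 0) :
    ∃ P Q : GL (Fin n) 𝒪, B.transpose = (P : Matrix (Fin n) (Fin n) 𝒪) * B * (Q : Matrix (Fin n) (Fin n) 𝒪) := by
  let π := Ideal.Quotient.mk (Ideal.span {B.det})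
  obtain ⟨U', hU', V', hV', D, hD⟩ := isTransvectionDiagonalizable_quotient
    (Ideal.span_singleton_eq_bot.not.mpr hB) (B.map π)
  obtain ⟨U, hU, rfl⟩ := transvectionSubmonoid.exists_map_eq Ideal.Quotient.mk_surjective hU'
  obtain ⟨V, hV, rfl⟩ := transvectionSubmonoid.exists_map_eq Ideal.Quotient.mk_surjective hV'
  set N := U * B * V
  have hdet : N.det = B.det := by
    simp [N, transvectionSubmonoid.det_eq_one hU, transvectionSubmonoid.det_eq_one hV]
  obtain ⟨Y, hY⟩ := exists_eq_add_smul_of_map_mk_eq (M := Nᵀ) (N := N) (d := B.det) <| by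
    rw [transpose_map, Matrix.map_mul, Matrix.map_mul, hD, diagonal_transpose]
  have hBN : IsUnimodularEquiv B N :=
    .of_isUnit (transvectionSubmonoid.isUnit hU) (transvectionSubmonoid.isUnit hV)
  exact hBN.trans <| (isUnimodularEquiv_transpose_of_eq_add_det_smul (hdet ▸ hB) (hdet ▸ hY)).trans
    hBN.symm.transpose

/-- A square matrix with nonzero determinant over a Dedekind domain is
unimodularly equivalent to its transpose. -/
theorem transpose_unimodular_equivalent (𝒪 : Type*) [CommRing 𝒪] [IsDomain 𝒪]
    [IsDedekindDomain 𝒪] (n : ℕ) (B : Matrix (Fin n) (Fin n) 𝒪)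
    (hB : B.det ≠ 0) :
    ∃ P Q : GL (Fin n) 𝒪, B.transpose = (P : Matrix (Fin n) (Fin n) 𝒪) * B * (Q : Matrix (Fin n) (Fin n) 𝒪) :=
  transpose_unimodular_equivalent_general 𝒪 n B hB
end
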